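/- arXiv:math/0601624 — 4 statements merged into one kernel-verified Lean document; each statement's English description precedes it below -/
import Mathlib

section
/- The number of Bernoulli paths of length n (paths starting at 0 with steps ±1) having exactly k peaks equals binomial(n+1, n-2k). -/
/-- The value at time `i` of the Bernoulli path with `n` steps encoded by
`f : Fin n → Bool` (`true` = step `+1`, `false` = step `-1`), started at `0`. -/
def pathVal {n : ℕ} (f : Fin n → Bool) (i : ℕ) : ℤ :=
  ∑ j ∈ Finset.range i, (if h : j < n then (if f ⟨j, h⟩ then (1 : ℤ) else -1) else 0)

/-- `x` is a peak: `1 ≤ x ≤ n-1` and `S(x-1) = S(x+1) = S(x) - 1`. -/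
def IsPeak {n : ℕ} (f : Fin n → Bool) (x : ℕ) : Prop :=
  0 < x ∧ x < n ∧ pathVal f x = pathVal f (x - 1) + 1 ∧
    pathVal f (x + 1) = pathVal f x - 1

instance {n : ℕ} (f : Fin n → Bool) (x : ℕ) : Decidable (IsPeak f x) := by
  unfold IsPeak; infer_instance

/-- Number of peaks of the path encoded by `f`. -/
def numPeaks {n : ℕ} (f : Fin n → Bool) : ℕ :=
  ((Finset.range n).filter (fun x => IsPeak f x)).card

/-!
Prepend a down step and append an up step to the path and read its steps as a word in
`false`/`true`. The peaks become exactly the patterns `true, false` of this padded word, and since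
the word starts with `false` and ends with `true` it has one more pattern `false, true`; so a path
with `k` peaks has exactly `2k + 1` step changes among the `n + 1` gaps of the padded word.
Conversely, the padded word is determined by the set of its change positions, and every set of odd
size arises. Hence paths with `k` peaks correspond to `(2k + 1)`-subsets of an `(n + 1)`-set.
-/

open Finset

section BoolSequence

variable (a : ℕ → Bool) (m : ℕ)

def changesBelow : Finset ℕ := (range m).filter fun i => a i ≠ a (i + 1)

def descentsBelow : Finset ℕ := (range m).filter fun i => a i = true ∧ a (i + 1) = false

theorem card_changesBelow :
    (#(changesBelow a m) : ℤ) = 2 * #(descentsBelow a m) + (a m).toNat - (a 0).toNat := by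
  have hterm : ∀ i, (if a i ≠ a (i + 1) then 1 else 0 : ℤ) =
      2 * (if a i = true ∧ a (i + 1) = false then 1 else 0) +
        ((a (i + 1)).toNat - (a i).toNat) := by
    intro i
    cases a i <;> cases a (i + 1) <;> rfl
  simp only [changesBelow, descentsBelow, card_filter, Nat.cast_sum, Nat.cast_ite,
    Nat.cast_one, Nat.cast_zero]
  rw [sum_congr rfl fun i _ => hterm i, sum_add_distrib, ← mul_sum,
    sum_range_sub (fun i => ((a i).toNat : ℤ))]
  ring

end BoolSequence

def parityBelow (s : Finset ℕ) (i : ℕ) : Bool := decide (Odd #(s ∩ range i))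

theorem parityBelow_zero (s : Finset ℕ) : parityBelow s 0 = false := by
  simp [parityBelow]

theorem parityBelow_succ (s : Finset ℕ) (i : ℕ) :
    parityBelow s (i + 1) = (parityBelow s i ^^ decide (i ∈ s)) := by
  by_cases hi : i ∈ s
  · rw [parityBelow, parityBelow, range_add_one, inter_insert_of_mem hi,
      card_insert_of_notMem (by simp)]
    simp [hi, Nat.odd_add_one, -Nat.not_odd_iff_even]
  · rw [parityBelow, parityBelow, range_add_one, inter_insert_of_notMem hi]
    simp [hi]

theorem eq_parityBelow_of_changes {a : ℕ → Bool} {s : Finset ℕ} {m : ℕ} (h0 : a 0 = false)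
    (hstep : ∀ i < m, a (i + 1) = (a i ^^ decide (i ∈ s))) :
    ∀ i ≤ m, a i = parityBelow s i := by
  intro i hi
  induction i with
  | zero => rw [h0, parityBelow_zero]
  | succ i ih => rw [hstep i hi, ih (by omega), parityBelow_succ]

section Paths

variable {n : ℕ}

/-- `paddedSteps f (j + 1)` is the step from `S j` to `S (j + 1)` (`true` for up); index `0`
holds the prepended down step and every index beyond `n` an appended up step. -/
def paddedSteps (f : Fin n → Bool) : ℕ → Bool
  | 0 => false
  | j + 1 => if h : j < n then f ⟨j, h⟩ else true

theorem paddedSteps_of_le (f : Fin n → Bool) {j : ℕ} (h : n ≤ j) :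
    paddedSteps f (j + 1) = true :=
  dif_neg (by omega)

theorem pathVal_succ_of_lt (f : Fin n → Bool) {i : ℕ} (h : i < n) :
    pathVal f (i + 1) = pathVal f i + if paddedSteps f (i + 1) then 1 else -1 := by
  simp [pathVal, paddedSteps, sum_range_succ, h]

theorem isPeak_iff (f : Fin n → Bool) (x : ℕ) :
    IsPeak f x ↔ x < n ∧ paddedSteps f x = true ∧ paddedSteps f (x + 1) = false := by
  rcases x with _ | y
  · simp [IsPeak, paddedSteps]
  by_cases hy : y + 1 < n
  · rw [IsPeak, Nat.add_sub_cancel, pathVal_succ_of_lt f hy,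
      pathVal_succ_of_lt f (show y < n by omega)]
    cases paddedSteps f (y + 1) <;> cases paddedSteps f (y + 2) <;> simp [hy, add_assoc]
  · simp [IsPeak, hy]

theorem numPeaks_eq_card_descentsBelow (f : Fin n → Bool) :
    numPeaks f = #(descentsBelow (paddedSteps f) (n + 1)) := by
  rw [numPeaks, descentsBelow, range_add_one, filter_insert,
    if_neg (by simp [paddedSteps_of_le f le_rfl])]
  congr 1
  exact filter_congr fun x hx => by simp [isPeak_iff, mem_range.1 hx]

def stepChanges (f : Fin n → Bool) : Finset ℕ := changesBelow (paddedSteps f) (n + 1)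

theorem card_stepChanges (f : Fin n → Bool) : #(stepChanges f) = 2 * numPeaks f + 1 := by
  have h := card_changesBelow (paddedSteps f) (n + 1)
  rw [paddedSteps_of_le f le_rfl, ← numPeaks_eq_card_descentsBelow,
    show paddedSteps f 0 = false from rfl] at h
  simp only [Bool.toNat_true, Bool.toNat_false] at h
  rw [stepChanges]
  omega

variable (n) in
def ofStepChanges (s : Finset ℕ) : Fin n → Bool := fun j => parityBelow s (j + 1)

theorem paddedSteps_eq_parityBelow (f : Fin n → Bool) {i : ℕ} (hi : i ≤ n + 1) :
    paddedSteps f i = parityBelow (stepChanges f) i :=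
  eq_parityBelow_of_changes rfl (fun i hi => by
    simp only [stepChanges, changesBelow, mem_filter, mem_range, hi, true_and]
    cases paddedSteps f i <;> cases paddedSteps f (i + 1) <;> rfl) i hi

theorem ofStepChanges_stepChanges (f : Fin n → Bool) : ofStepChanges n (stepChanges f) = f := by
  funext j
  rw [ofStepChanges, ← paddedSteps_eq_parityBelow f (by omega)]
  simp [paddedSteps]

theorem paddedSteps_ofStepChanges {s : Finset ℕ} (hs : s ⊆ range (n + 1)) (hodd : Odd #s)
    {i : ℕ} (hi : i ≤ n + 1) : paddedSteps (ofStepChanges n s) i = parityBelow s i := by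
  rcases i with _ | j
  · rw [parityBelow_zero]; rfl
  by_cases hj : j < n
  · simp [paddedSteps, ofStepChanges, hj]
  · obtain rfl : j = n := by omega
    simp [paddedSteps, parityBelow, inter_eq_left.2 hs, hodd]

theorem stepChanges_ofStepChanges {s : Finset ℕ} (hs : s ⊆ range (n + 1)) (hodd : Odd #s) :
    stepChanges (ofStepChanges n s) = s := by
  ext i
  simp only [stepChanges, changesBelow, mem_filter, mem_range]
  constructor
  · rintro ⟨hi, hne⟩
    rw [paddedSteps_ofStepChanges hs hodd (by omega),
      paddedSteps_ofStepChanges hs hodd (by omega), parityBelow_succ] at hne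
    by_contra his
    simp [his] at hne
  · intro hi
    have hi' := mem_range.1 (hs hi)
    refine ⟨hi', ?_⟩
    rw [paddedSteps_ofStepChanges hs hodd (by omega),
      paddedSteps_ofStepChanges hs hodd (by omega), parityBelow_succ]
    simp [hi]

end Paths

theorem choose_succ_two_mul_add_one (n k : ℕ) :
    (n + 1).choose (2 * k + 1) = if 2 * k ≤ n then (n + 1).choose (n - 2 * k) else 0 := by
  split_ifs with h
  · exact Nat.choose_symm_of_eq_add (by omega)
  · exact Nat.choose_eq_zero_of_lt (by omega)

/-- The number of Bernoulli paths of length `n` with exactly `k` peaks is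
`binomial(n+1, n-2k)` (which is `0` when `n - 2k < 0`). -/
theorem card_paths_with_k_peaks (n k : ℕ) :
    ((Finset.univ : Finset (Fin n → Bool)).filter (fun f => numPeaks f = k)).card
      = if 2 * k ≤ n then (n + 1).choose (n - 2 * k) else 0 := by
  rw [← choose_succ_two_mul_add_one, ← card_range (n + 1), ← card_powersetCard]
  refine card_bij' (fun f _ => stepChanges f) (fun s _ => ofStepChanges n s) ?_ ?_ ?_ ?_
  · intro f hf
    rw [mem_filter] at hf
    rw [mem_powersetCard, card_stepChanges, hf.2]
    exact ⟨filter_subset _ _, rfl⟩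
  · intro s hs
    rw [mem_powersetCard] at hs
    have hodd : Odd #s := hs.2 ▸ odd_two_mul_add_one k
    have := card_stepChanges (ofStepChanges n s)
    rw [stepChanges_ofStepChanges hs.1 hodd, hs.2] at this
    simp only [mem_filter, mem_univ, true_and]
    omega
  · intro f _
    exact ofStepChanges_stepChanges f
  · intro s hs
    rw [mem_powersetCard] at hs
    exact stepChanges_ofStepChanges hs.1 (hs.2 ▸ odd_two_mul_add_one k)
end

section
/- The number of Bernoulli excursions of length 2n (nonnegative paths with ±1 steps starting and ending at 0) having exactly k peaks equals the Narayana number (1/n)·binomial(n,k)·binomial(n,k-1). -/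
/-- The path stays nonnegative on `[0, n]`. -/
def IsNonneg {n : ℕ} (f : Fin n → Bool) : Prop :=
  ∀ i ∈ Finset.range (n + 1), 0 ≤ pathVal f i

instance {n : ℕ} (f : Fin n → Bool) : Decidable (IsNonneg f) := by
  unfold IsNonneg; infer_instance

/-!
Record an excursion of length `2n` with `k` peaks by the pair `(S, T)`, where `S` holds the
numbers of up steps made at its peaks and `T` the numbers of down steps made at its valleys; the
last peak gives `n ∈ S`, and `#S = k`, `#T = k - 1`. Peaks and valleys alternate, so before step
`i` the path has passed as many peaks as valleys if step `i` goes up and one more peak if it goes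
down. Read through `S` and `T` this rule rebuilds the path from the pair, and nonnegativity
becomes the dominance `#{s ∈ S | s ≤ c} ≤ #{t ∈ T | t ≤ c}` for `c < n`. Hence excursions with
`k` peaks correspond to dominated pairs of `(k-1)`-subsets of `{1, …, n-1}`.

For a pair of `(r+1)`-subsets that is not dominated, exchanging the parts of the two sets above
the first violation is a reflection onto the pairs of an `(r+2)`-subset and an `r`-subset. So
there are `C(m, r+1)² - C(m, r+2) C(m, r)` dominated pairs of `(r+1)`-subsets of `{1, …, m}`,
and `m + 1` times this number is `C(m+1, r+2) C(m+1, r+1)`.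
-/

namespace Narayana

open Finset

def cardLE (X : Finset ℕ) (c : ℕ) : ℕ := #(X.filter (· ≤ c))

section cardLE

variable {X Y : Finset ℕ} {a c : ℕ}

lemma cardLE_mono (X : Finset ℕ) : Monotone (cardLE X) :=
  fun _ _ h => card_le_card fun _ => by
    simp only [mem_filter]; exact fun hx => ⟨hx.1, hx.2.trans h⟩

lemma cardLE_succ (X : Finset ℕ) (c : ℕ) :
    cardLE X (c + 1) = cardLE X c + if c + 1 ∈ X then 1 else 0 := by
  rw [cardLE, cardLE, ← card_filter_add_card_filter_not (s := X.filter (· ≤ c + 1)) (p := (· ≤ c)),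
    filter_filter, filter_filter, filter_congr (p := fun x => x ≤ c + 1 ∧ x ≤ c) (q := (· ≤ c))
    (fun x _ => by omega), filter_congr (p := fun x => x ≤ c + 1 ∧ ¬x ≤ c) (q := (· = c + 1))
    (fun x _ => by omega), filter_eq']
  split_ifs <;> simp

lemma cardLE_succ_le (X : Finset ℕ) (c : ℕ) : cardLE X (c + 1) ≤ cardLE X c + 1 := by
  rw [cardLE_succ]; split_ifs <;> omega

lemma cardLE_le_card (X : Finset ℕ) (c : ℕ) : cardLE X c ≤ #X :=
  card_le_card (filter_subset _ _)

lemma cardLE_zero (h : 0 ∉ X) : cardLE X 0 = 0 :=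
  card_eq_zero.2 <| filter_eq_empty_iff.2 fun x hx hx0 => h (by rwa [Nat.le_zero.1 hx0] at hx)

lemma cardLE_eq_card (h : ∀ x ∈ X, x ≤ c) : cardLE X c = #X :=
  congrArg card (filter_true_of_mem h)

lemma cardLE_lt_card (ha : a ∈ X) (hc : c < a) : cardLE X c < #X :=
  card_lt_card <| (filter_ssubset).2 ⟨a, ha, by omega⟩

lemma cardLE_insert_of_lt (hc : c < a) : cardLE (insert a X) c = cardLE X c := by
  rw [cardLE, filter_insert, if_neg (by omega), cardLE]

lemma cardLE_erase_of_lt (hc : c < a) : cardLE (X.erase a) c = cardLE X c := by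
  rw [cardLE, filter_erase, erase_eq_of_notMem (by simp only [mem_filter, not_and, not_le]; omega),
    cardLE]

lemma cardLE_union (h : Disjoint X Y) (c : ℕ) : cardLE (X ∪ Y) c = cardLE X c + cardLE Y c := by
  rw [cardLE, filter_union, card_union_of_disjoint (disjoint_filter_filter h)]; rfl

lemma cardLE_image {ι : Type*} [DecidableEq ι] {P : Finset ι} {v : ι → ℕ}
    (hv : Set.InjOn v P) (c : ℕ) : cardLE (P.image v) c = #(P.filter (v · ≤ c)) := by
  rw [cardLE, filter_image, card_image_of_injOn (hv.mono (coe_subset.2 (filter_subset _ _)))]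

lemma eq_of_forall_mem_Icc_iff {m : ℕ} (hX : X ⊆ Icc 1 m) (hY : Y ⊆ Icc 1 m)
    (h : ∀ x ∈ Icc 1 m, x ∈ X ↔ x ∈ Y) : X = Y :=
  ext fun x => ⟨fun hx => (h x (hX hx)).1 hx, fun hx => (h x (hY hx)).2 hx⟩

end cardLE

def Dominates (S T : Finset ℕ) : Prop := ∀ c, cardLE S c ≤ cardLE T c

open Classical in
noncomputable def dominatedPairs (m r : ℕ) : Finset (Finset ℕ × Finset ℕ) :=
  (powersetCard r (Icc 1 m) ×ˢ powersetCard r (Icc 1 m)).filter fun p => Dominates p.1 p.2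

lemma mem_dominatedPairs {m r : ℕ} {p : Finset ℕ × Finset ℕ} :
    p ∈ dominatedPairs m r ↔
      (p.1 ⊆ Icc 1 m ∧ #p.1 = r) ∧ (p.2 ⊆ Icc 1 m ∧ #p.2 = r) ∧ Dominates p.1 p.2 := by
  classical
  simp only [dominatedPairs, mem_filter, mem_product, mem_powersetCard, and_assoc]

section Reflection

def exchangeAbove (j : ℕ) (p : Finset ℕ × Finset ℕ) : Finset ℕ × Finset ℕ :=
  (p.1.filter (· ≤ j) ∪ p.2.filter (j < ·), p.2.filter (· ≤ j) ∪ p.1.filter (j < ·))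

lemma exchangeAbove_exchangeAbove (j : ℕ) (p : Finset ℕ × Finset ℕ) :
    exchangeAbove j (exchangeAbove j p) = p := by
  ext x <;> rcases le_or_gt x j with h | h <;> simp [exchangeAbove, h, not_le_of_gt, not_lt_of_ge]

lemma disjoint_filter_le_filter_lt (X Y : Finset ℕ) (j : ℕ) :
    Disjoint (X.filter (· ≤ j)) (Y.filter (j < ·)) :=
  disjoint_left.2 fun x hX hY => by simp only [mem_filter] at hX hY; omega

lemma cardLE_filter_le_union_of_le (X Y : Finset ℕ) {j c : ℕ} (hc : c ≤ j) :
    cardLE (X.filter (· ≤ j) ∪ Y.filter (j < ·)) c = cardLE X c := by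
  have hY : cardLE (Y.filter (j < ·)) c = 0 :=
    card_eq_zero.2 <| filter_eq_empty_iff.2 fun x hx => by rw [mem_filter] at hx; omega
  have hX : cardLE (X.filter (· ≤ j)) c = cardLE X c := by
    rw [cardLE, cardLE, filter_filter]
    exact congrArg card (filter_congr fun x _ => by omega)
  rw [cardLE_union (disjoint_filter_le_filter_lt X Y j), hX, hY, add_zero]

lemma card_filter_le_union (X Y : Finset ℕ) (j : ℕ) :
    #(X.filter (· ≤ j) ∪ Y.filter (j < ·)) = cardLE X j + (#Y - cardLE Y j) := by
  rw [card_union_of_disjoint (disjoint_filter_le_filter_lt X Y j), cardLE, cardLE,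
    ← card_filter_add_card_filter_not (s := Y) (p := (· ≤ j))]
  simp only [not_le, add_tsub_cancel_left]

lemma exchangeAbove_subset {s : Finset ℕ} (j : ℕ) {p : Finset ℕ × Finset ℕ} (h1 : p.1 ⊆ s)
    (h2 : p.2 ⊆ s) : (exchangeAbove j p).1 ⊆ s ∧ (exchangeAbove j p).2 ⊆ s :=
  ⟨union_subset ((filter_subset _ _).trans h1) ((filter_subset _ _).trans h2),
    union_subset ((filter_subset _ _).trans h2) ((filter_subset _ _).trans h1)⟩

lemma not_dominates_iff {S T : Finset ℕ} : ¬Dominates S T ↔ ∃ j, cardLE T j < cardLE S j := by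
  simp [Dominates]

noncomputable def firstViolation (p : Finset ℕ × Finset ℕ) : ℕ :=
  sInf {j | cardLE p.2 j < cardLE p.1 j}

-- `firstViolation p = sInf ∅ = 0` for dominated `p`; `reflect` is only applied to the others.
noncomputable def reflect (p : Finset ℕ × Finset ℕ) : Finset ℕ × Finset ℕ :=
  exchangeAbove (firstViolation p) p

variable {p : Finset ℕ × Finset ℕ}

lemma firstViolation_spec (h : ¬Dominates p.1 p.2) :
    cardLE p.2 (firstViolation p) < cardLE p.1 (firstViolation p) :=
  Nat.sInf_mem (not_dominates_iff.1 h)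

lemma cardLE_firstViolation (h0 : 0 ∉ p.1) (h : ¬Dominates p.1 p.2) :
    cardLE p.1 (firstViolation p) = cardLE p.2 (firstViolation p) + 1 := by
  have hj := firstViolation_spec h
  obtain ⟨j, hj'⟩ : ∃ j, firstViolation p = j + 1 := by
    refine Nat.exists_eq_succ_of_ne_zero fun h' => ?_
    rw [h', cardLE_zero h0] at hj
    omega
  have hprev : ¬cardLE p.2 j < cardLE p.1 j :=
    Nat.notMem_of_lt_sInf (s := {j | cardLE p.2 j < cardLE p.1 j})
      (show j < firstViolation p by omega)
  rw [hj'] at hj ⊢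
  have := cardLE_succ_le p.1 j
  have := cardLE_mono p.2 (Nat.le_add_right j 1)
  omega

lemma cardLE_reflect_of_le {c : ℕ} (hc : c ≤ firstViolation p) :
    cardLE (reflect p).1 c = cardLE p.1 c ∧ cardLE (reflect p).2 c = cardLE p.2 c :=
  ⟨cardLE_filter_le_union_of_le _ _ hc, cardLE_filter_le_union_of_le _ _ hc⟩

lemma firstViolation_reflect (h : ¬Dominates p.1 p.2) :
    firstViolation (reflect p) = firstViolation p := by
  have hmem : ∀ c ≤ firstViolation p,
      cardLE (reflect p).2 c < cardLE (reflect p).1 c ↔ cardLE p.2 c < cardLE p.1 c := by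
    intro c hc
    rw [(cardLE_reflect_of_le hc).1, (cardLE_reflect_of_le hc).2]
  have hj : firstViolation p ∈ {j | cardLE (reflect p).2 j < cardLE (reflect p).1 j} :=
    (hmem _ le_rfl).2 (firstViolation_spec h)
  refine le_antisymm (Nat.sInf_le hj) (not_lt.1 fun hlt => ?_)
  exact Nat.notMem_of_lt_sInf hlt ((hmem _ hlt.le).1 (Nat.sInf_mem ⟨_, hj⟩))

lemma not_dominates_reflect (h : ¬Dominates p.1 p.2) : ¬Dominates (reflect p).1 (reflect p).2 :=
  not_dominates_iff.2 ⟨_, by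
    rw [(cardLE_reflect_of_le le_rfl).1, (cardLE_reflect_of_le le_rfl).2]
    exact firstViolation_spec h⟩

lemma reflect_reflect (h : ¬Dominates p.1 p.2) : reflect (reflect p) = p := by
  rw [reflect, firstViolation_reflect h]
  exact exchangeAbove_exchangeAbove _ _

lemma card_reflect (h0 : 0 ∉ p.1) (h : ¬Dominates p.1 p.2) :
    #(reflect p).1 = #p.2 + 1 ∧ #(reflect p).2 + 1 = #p.1 := by
  have := cardLE_firstViolation h0 h
  have := cardLE_le_card p.1 (firstViolation p)
  have := cardLE_le_card p.2 (firstViolation p)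
  constructor <;> simp only [reflect, exchangeAbove, card_filter_le_union] <;> omega

end Reflection

open Classical in
lemma card_filter_not_dominates (m r : ℕ) :
    #((powersetCard (r + 1) (Icc 1 m) ×ˢ powersetCard (r + 1) (Icc 1 m)).filter
        fun p => ¬Dominates p.1 p.2) = m.choose (r + 2) * m.choose r := by
  have h0 : ∀ {X : Finset ℕ}, X ⊆ Icc 1 m → 0 ∉ X := fun hX h => by simpa using hX h
  have hbad : ∀ p ∈ powersetCard (r + 2) (Icc 1 m) ×ˢ powersetCard r (Icc 1 m),
      ¬Dominates p.1 p.2 := by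
    intro p hp
    simp only [mem_product, mem_powersetCard] at hp
    refine not_dominates_iff.2 ⟨m, ?_⟩
    rw [cardLE_eq_card fun x hx => (mem_Icc.1 (hp.1.1 hx)).2,
      cardLE_eq_card fun x hx => (mem_Icc.1 (hp.2.1 hx)).2]
    omega
  rw [show m.choose (r + 2) * m.choose r
      = #(powersetCard (r + 2) (Icc 1 m) ×ˢ powersetCard r (Icc 1 m)) by simp]
  refine card_bij' (fun p _ => reflect p) (fun p _ => reflect p) ?_ ?_
    (fun p hp => reflect_reflect (mem_filter.1 hp).2) (fun p hp => reflect_reflect (hbad p hp))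
  · rintro p hp
    simp only [mem_filter, mem_product, mem_powersetCard] at hp ⊢
    obtain ⟨⟨⟨hS, hSc⟩, hT, hTc⟩, hp⟩ := hp
    have := card_reflect (h0 hS) hp
    exact ⟨⟨(exchangeAbove_subset _ hS hT).1, by omega⟩, (exchangeAbove_subset _ hS hT).2, by omega⟩
  · rintro p hp
    have hp' := hbad p hp
    simp only [mem_filter, mem_product, mem_powersetCard] at hp ⊢
    obtain ⟨⟨hS, hSc⟩, hT, hTc⟩ := hp
    have := card_reflect (h0 hS) hp'
    exact ⟨⟨⟨(exchangeAbove_subset _ hS hT).1, by omega⟩, (exchangeAbove_subset _ hS hT).2,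
      by omega⟩, not_dominates_reflect hp'⟩

open Classical in
lemma card_dominatedPairs_add (m r : ℕ) :
    #(dominatedPairs m (r + 1)) + m.choose (r + 2) * m.choose r = m.choose (r + 1) ^ 2 := by
  rw [← card_filter_not_dominates, dominatedPairs, card_filter_add_card_filter_not]
  simp [sq]

open Classical in
lemma card_dominatedPairs_zero (m : ℕ) : #(dominatedPairs m 0) = 1 := by
  rw [dominatedPairs, powersetCard_zero, singleton_product_singleton, card_eq_one]
  exact ⟨_, filter_true_of_mem fun p hp => (mem_singleton.1 hp) ▸ fun _ => le_rfl⟩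

lemma add_one_mul_card_dominatedPairs (m r : ℕ) :
    (m + 1) * #(dominatedPairs m r) = (m + 1).choose (r + 1) * (m + 1).choose r := by
  cases r with
  | zero => simp [card_dominatedPairs_zero]
  | succ r =>
    have hG := card_dominatedPairs_add m r
    have h1 := Nat.add_one_mul_choose_eq m (r + 1)
    have h2 := Nat.add_one_mul_choose_eq m r
    rw [Nat.choose_succ_succ' m (r + 1)] at h1 ⊢
    rw [Nat.choose_succ_succ' m r] at h2 ⊢
    zify at hG h1 h2 ⊢
    linear_combination (m + 1 : ℤ) * hG + (m.choose r + m.choose (r + 1) : ℤ) * h1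
      - (m.choose (r + 1) + m.choose (r + 2) : ℤ) * h2

section Counting

variable {p : ℕ → Prop} [DecidablePred p] {i j : ℕ}

lemma count_congr {q : ℕ → Prop} [DecidablePred q] (h : ∀ j < i, p j ↔ q j) :
    Nat.count p i = Nat.count q i := by
  simp only [Nat.count_eq_card_filter_range]
  exact congrArg card (filter_congr fun j hj => h j (mem_range.1 hj))

lemma count_succ_le_count_iff (hi : p i) : Nat.count p (i + 1) ≤ Nat.count p j ↔ i < j := by
  refine ⟨fun h => not_le.1 fun hji => ?_, fun h => Nat.count_monotone p h⟩
  have := Nat.count_monotone p hji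
  have := Nat.count_lt_count_succ_iff.2 hi
  omega

lemma exists_count_eq_of_lt {N : ℕ} (h : j < Nat.count p N) : ∃ i < N, p i ∧ Nat.count p i = j := by
  induction N with
  | zero => simp at h
  | succ N ih =>
    rcases lt_or_ge j (Nat.count p N) with hj | hj
    · obtain ⟨i, hi, hpi⟩ := ih hj
      exact ⟨i, by omega, hpi⟩
    · rw [Nat.count_succ] at h
      by_cases hN : p N
      · exact ⟨N, by omega, hN, by rw [if_pos hN] at h; omega⟩
      · rw [if_neg hN] at h; omega

lemma count_true_add_count_false (F : ℕ → Bool) (i : ℕ) :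
    Nat.count (F · = true) i + Nat.count (F · = false) i = i := by
  induction i with
  | zero => simp
  | succ i ih => cases h : F i <;>
      simp only [Nat.count_succ, h, Bool.false_eq_true, Bool.true_eq_false, ↓reduceIte,
        add_zero] <;>
      omega

lemma count_eq_count_of_eqOn {F G : ℕ → Bool} {N : ℕ} (h : ∀ i < N, G i = F i) (b : Bool) {j : ℕ}
    (hj : j ≤ N) : Nat.count (G · = b) j = Nat.count (F · = b) j :=
  count_congr fun i hi => by rw [h i (by omega)]

end Counting

section Turns

variable (F : ℕ → Bool)

/-- `i ∈ turns F true j` means that `i + 1` is a peak in the indexing of `IsPeak`. -/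
def turns (b : Bool) (j : ℕ) : Finset ℕ := (range j).filter fun i => F i = b ∧ F (i + 1) = !b

def turnHeights (b : Bool) (j : ℕ) : Finset ℕ :=
  (turns F b j).image fun i => Nat.count (F · = b) (i + 1)

variable {F} {b : Bool} {i j M : ℕ}

lemma mem_turns : i ∈ turns F b j ↔ i < j ∧ F i = b ∧ F (i + 1) = !b := by
  rw [turns, mem_filter, mem_range]

lemma card_turns_succ (b : Bool) (j : ℕ) :
    #(turns F b (j + 1)) = #(turns F b j) + if F j = b ∧ F (j + 1) = !b then 1 else 0 := by
  rw [turns, range_add_one, filter_insert]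
  split_ifs
  · exact card_insert_of_notMem (by simp)
  · rfl

/-- Peaks and valleys alternate. -/
lemma card_turns_true_add (F : ℕ → Bool) (j : ℕ) :
    #(turns F true j) + (F j).toNat = #(turns F false j) + (F 0).toNat := by
  induction j with
  | zero => simp [turns]
  | succ j ih =>
    rw [card_turns_succ, card_turns_succ]
    cases h : F j <;> cases F (j + 1) <;>
      simp only [h, Bool.toNat_true, Bool.toNat_false, Bool.not_true, Bool.not_false,
        Bool.false_eq_true, Bool.true_eq_false, and_true, and_false, and_self, ↓reduceIte,
        add_zero] at ih ⊢ <;>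
      omega

lemma count_injOn_turns (b : Bool) (M : ℕ) :
    Set.InjOn (fun i => Nat.count (F · = b) (i + 1)) (turns F b M) := by
  intro i hi i' hi' h
  have hb := (mem_turns.1 hi).2.1
  have hb' := (mem_turns.1 hi').2.1
  have := (count_succ_le_count_iff (p := (F · = b)) hb).1 h.le
  have := (count_succ_le_count_iff (p := (F · = b)) hb').1 h.ge
  omega

lemma card_turnHeights (b : Bool) (M : ℕ) : #(turnHeights F b M) = #(turns F b M) :=
  card_image_of_injOn (count_injOn_turns b M)

lemma turnHeights_subset (b : Bool) (M : ℕ) :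
    turnHeights F b M ⊆ Icc 1 (Nat.count (F · = b) M) := by
  intro x hx
  obtain ⟨i, hi, rfl⟩ := mem_image.1 hx
  obtain ⟨hiM, hb, -⟩ := mem_turns.1 hi
  have := Nat.count_lt_count_succ_iff (p := (F · = b)).2 hb
  exact mem_Icc.2 ⟨by omega, Nat.count_monotone _ hiM⟩

lemma zero_notMem_turnHeights (b : Bool) (M : ℕ) : 0 ∉ turnHeights F b M := fun h =>
  absurd (mem_Icc.1 (turnHeights_subset b M h)).1 (by omega)

lemma cardLE_turnHeights (hj : j ≤ M) :
    cardLE (turnHeights F b M) (Nat.count (F · = b) j) = #(turns F b j) := by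
  rw [turnHeights, cardLE_image (count_injOn_turns b M), turns, turns, filter_filter]
  congr 1
  ext i
  simp only [mem_filter, mem_range]
  constructor
  · rintro ⟨hiM, ⟨hb, hb'⟩, hcount⟩
    exact ⟨(count_succ_le_count_iff (p := (F · = b)) hb).1 hcount, hb, hb'⟩
  · rintro ⟨hij, hb, hb'⟩
    exact ⟨by omega, ⟨hb, hb'⟩, (count_succ_le_count_iff (p := (F · = b)) hb).2 hij⟩

end Turns

/-- The alternation rule, with `S` and `T` in the role of the up-step counts at the peaks and the
down-step counts at the valleys of `F`. -/
def CornerBalanced (S T : Finset ℕ) (F : ℕ → Bool) (i : ℕ) : Prop :=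
  cardLE S (Nat.count (F · = true) i) + (F i).toNat = cardLE T (Nat.count (F · = false) i) + 1

section CornerBalanced

variable {S T S' T' : Finset ℕ} {F G : ℕ → Bool} {M : ℕ}

lemma cornerBalanced_turnHeights (h0 : F 0 = true) {i : ℕ} (hi : i ≤ M) :
    CornerBalanced (turnHeights F true M) (turnHeights F false M) F i := by
  have := card_turns_true_add F i
  rw [h0] at this
  rw [CornerBalanced, cardLE_turnHeights hi, cardLE_turnHeights hi]
  simpa using this

lemma eq_of_cornerBalanced (hF : ∀ i ≤ M, CornerBalanced S T F i)
    (hG : ∀ i ≤ M, CornerBalanced S T G i) : ∀ i ≤ M, F i = G i := by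
  intro i
  induction i using Nat.strong_induction_on with
  | _ i ih =>
    intro hi
    have hcount : ∀ b, Nat.count (F · = b) i = Nat.count (G · = b) i := fun b =>
      count_congr fun j hj => by rw [ih j hj (by omega)]
    have h1 := hF i hi
    have h2 := hG i hi
    rw [CornerBalanced, hcount, hcount] at h1
    rw [CornerBalanced] at h2
    cases hFi : F i <;> cases hGi : G i <;>
      simp only [hFi, hGi, Bool.toNat_true, Bool.toNat_false, add_zero] at h1 h2 ⊢ <;> omega

lemma mem_iff_mem_of_cornerBalanced_of_le_count_true (hF : ∀ i ≤ M, CornerBalanced S T F i)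
    (hF' : ∀ i ≤ M, CornerBalanced S' T' F i) {s : ℕ} (hs : s ∈ Icc 1 (Nat.count (F · = true) M)) :
    s ∈ S ↔ s ∈ S' := by
  obtain ⟨hs1, hsM⟩ := mem_Icc.1 hs
  obtain ⟨i, hiM, hi, hcount⟩ :=
    exists_count_eq_of_lt (p := (F · = true)) (N := M) (j := s - 1) (by omega)
  have hup : Nat.count (F · = true) (i + 1) = s := by
    rw [Nat.count_succ, if_pos hi]; omega
  have hflat : Nat.count (F · = false) (i + 1) = Nat.count (F · = false) i := by
    rw [Nat.count_succ, if_neg (by simp [hi])]; rfl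
  have e1 := hF i hiM.le
  have e2 := hF (i + 1) hiM
  have e1' := hF' i hiM.le
  have e2' := hF' (i + 1) hiM
  simp only [CornerBalanced, hup, hflat, hcount, hi] at e1 e2 e1' e2'
  have hS := cardLE_succ S (s - 1)
  have hS' := cardLE_succ S' (s - 1)
  rw [Nat.sub_add_cancel hs1] at hS hS'
  split_ifs at hS hS' <;> simp_all

lemma mem_iff_mem_of_cornerBalanced_of_le_count_false (hF : ∀ i ≤ M, CornerBalanced S T F i)
    (hF' : ∀ i ≤ M, CornerBalanced S' T' F i) {t : ℕ} (ht : t ∈ Icc 1 (Nat.count (F · = false) M)) :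
    t ∈ T ↔ t ∈ T' := by
  obtain ⟨ht1, htM⟩ := mem_Icc.1 ht
  obtain ⟨i, hiM, hi, hcount⟩ :=
    exists_count_eq_of_lt (p := (F · = false)) (N := M) (j := t - 1) (by omega)
  have hdown : Nat.count (F · = false) (i + 1) = t := by
    rw [Nat.count_succ, if_pos hi]; omega
  have hflat : Nat.count (F · = true) (i + 1) = Nat.count (F · = true) i := by
    rw [Nat.count_succ, if_neg (by simp [hi])]; rfl
  have e1 := hF i hiM.le
  have e2 := hF (i + 1) hiM
  have e1' := hF' i hiM.le
  have e2' := hF' (i + 1) hiM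
  simp only [CornerBalanced, hdown, hflat, hcount, hi] at e1 e2 e1' e2'
  have hT := cardLE_succ T (t - 1)
  have hT' := cardLE_succ T' (t - 1)
  rw [Nat.sub_add_cancel ht1] at hT hT'
  split_ifs at hT hT' <;> simp_all

end CornerBalanced

section Decode

variable (S T : Finset ℕ)

/-- `(#up steps, #down steps)` after `i` steps of the path rebuilt from `(S, T)` by the
alternation rule `CornerBalanced`. -/
def walk : ℕ → ℕ × ℕ
  | 0 => (0, 0)
  | i + 1 =>
    if cardLE S (walk i).1 ≤ cardLE T (walk i).2 then ((walk i).1 + 1, (walk i).2)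
    else ((walk i).1, (walk i).2 + 1)

def decode (i : ℕ) : Bool := decide (cardLE S (walk S T i).1 ≤ cardLE T (walk S T i).2)

lemma walk_eq_count (i : ℕ) :
    walk S T i = (Nat.count (decode S T · = true) i, Nat.count (decode S T · = false) i) := by
  induction i with
  | zero => simp [walk]
  | succ i ih =>
    have hd : decode S T i = decide (cardLE S (walk S T i).1 ≤ cardLE T (walk S T i).2) := rfl
    rw [Nat.count_succ, Nat.count_succ, walk, hd]
    rcases hw : walk S T i with ⟨a, b⟩
    rw [hw, Prod.mk.injEq] at ih
    rw [← ih.1, ← ih.2]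
    by_cases h : cardLE S a ≤ cardLE T b <;> simp [h]

lemma count_decode_true (i : ℕ) : Nat.count (decode S T · = true) i = (walk S T i).1 := by
  rw [walk_eq_count]

lemma count_decode_false (i : ℕ) : Nat.count (decode S T · = false) i = (walk S T i).2 := by
  rw [walk_eq_count]

variable {S T}

lemma cornerBalanced_decode (hS : 0 ∉ S) (hT : 0 ∉ T) (i : ℕ) :
    CornerBalanced S T (decode S T) i := by
  have bounds : cardLE T (walk S T i).2 ≤ cardLE S (walk S T i).1 ∧
      cardLE S (walk S T i).1 ≤ cardLE T (walk S T i).2 + 1 := by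
    induction i with
    | zero => simp [walk, cardLE_zero hS, cardLE_zero hT]
    | succ i ih =>
      have := cardLE_succ_le S (walk S T i).1
      have := cardLE_succ_le T (walk S T i).2
      have := cardLE_mono S (Nat.le_add_right (walk S T i).1 1)
      have := cardLE_mono T (Nat.le_add_right (walk S T i).2 1)
      by_cases h : cardLE S (walk S T i).1 ≤ cardLE T (walk S T i).2 <;>
        simp only [walk, h, ↓reduceIte] <;> omega
  rw [CornerBalanced, count_decode_true, count_decode_false, decode]
  by_cases h : cardLE S (walk S T i).1 ≤ cardLE T (walk S T i).2 <;>
    simp only [h, decide_true, decide_false, Bool.toNat_true, Bool.toNat_false, add_zero] <;> omega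

lemma walk_snd_le_fst (hdom : Dominates S T) (i : ℕ) : (walk S T i).2 ≤ (walk S T i).1 := by
  induction i with
  | zero => simp [walk]
  | succ i ih =>
    by_cases h : cardLE S (walk S T i).1 ≤ cardLE T (walk S T i).2
    · simp only [walk, h, ↓reduceIte]; omega
    · simp only [walk, h, ↓reduceIte]
      by_contra hle
      have := hdom (walk S T i).1
      have := cardLE_mono T (show (walk S T i).1 ≤ (walk S T i).2 by omega)
      omega

lemma walk_fst_add_snd (i : ℕ) : (walk S T i).1 + (walk S T i).2 = i := by
  rw [← count_decode_true, ← count_decode_false, count_true_add_count_false]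

lemma walk_two_mul {n : ℕ} (hS : ∀ x ∈ S, x ≤ n) (hT : n ∈ T) (hcard : #S = #T)
    (hdom : Dominates S T) : walk S T (2 * n) = (n, n) := by
  have hfst : ∀ i ≤ 2 * n, (walk S T i).1 ≤ n := by
    intro i
    induction i with
    | zero => simp [walk]
    | succ i ih =>
      intro hi
      have := walk_fst_add_snd (S := S) (T := T) i
      by_cases h : cardLE S (walk S T i).1 ≤ cardLE T (walk S T i).2
      · simp only [walk, h, ↓reduceIte]
        by_contra hn
        have ha : (walk S T i).1 = n := by have := ih (by omega); omega
        rw [ha, cardLE_eq_card hS] at h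
        have := cardLE_lt_card hT (show (walk S T i).2 < n by omega)
        omega
      · simp only [walk, h, ↓reduceIte]; exact ih (by omega)
  have := hfst _ le_rfl
  have := walk_snd_le_fst hdom (2 * n)
  have := walk_fst_add_snd (S := S) (T := T) (2 * n)
  ext <;> simp only <;> omega

end Decode

section Paths

variable {N : ℕ} (f : Fin N → Bool)

def toSeq (j : ℕ) : Bool := if h : j < N then f ⟨j, h⟩ else false

lemma pathVal_succ {i : ℕ} (hi : i < N) :
    pathVal f (i + 1) = pathVal f i + if toSeq f i then 1 else -1 := by
  rw [pathVal, sum_range_succ, dif_pos hi, toSeq, dif_pos hi]; rfl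

lemma pathVal_eq_count {i : ℕ} (hi : i ≤ N) :
    pathVal f i = Nat.count (toSeq f · = true) i - (Nat.count (toSeq f · = false) i : ℤ) := by
  induction i with
  | zero => simp [pathVal]
  | succ i ih =>
    rw [pathVal_succ f hi, ih (by omega), Nat.count_succ, Nat.count_succ]
    cases toSeq f i <;>
      simp only [Bool.false_eq_true, Bool.true_eq_false, ↓reduceIte, add_zero, Nat.cast_add,
        Nat.cast_one] <;>
      ring

lemma isPeak_iff (x : ℕ) :
    IsPeak f x ↔ 0 < x ∧ x < N ∧ toSeq f (x - 1) = true ∧ toSeq f x = false := by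
  rw [IsPeak]
  refine and_congr_right fun h0 => and_congr_right fun hN => ?_
  have h1 := pathVal_succ f (show x - 1 < N by omega)
  rw [Nat.sub_add_cancel h0] at h1
  rw [pathVal_succ f hN, h1]
  cases toSeq f (x - 1) <;> cases toSeq f x <;> simp; omega

lemma numPeaks_eq_card_turns : numPeaks f = #(turns (toSeq f) true (N - 1)) := by
  refine card_bij' (fun x _ => x - 1) (fun i _ => i + 1) (fun x hx => ?_) (fun i hi => ?_)
    (fun x hx => ?_) (fun i _ => rfl)
  · rw [mem_filter, isPeak_iff] at hx
    obtain ⟨-, h0, hN, hup, hdown⟩ := hx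
    rw [mem_turns, Nat.sub_add_cancel h0]
    exact ⟨by omega, hup, hdown⟩
  · rw [mem_turns] at hi
    rw [mem_filter, mem_range, isPeak_iff, Nat.add_sub_cancel]
    exact ⟨by omega, by omega, by omega, hi.2⟩
  · rw [mem_filter, isPeak_iff] at hx
    exact Nat.sub_add_cancel hx.2.1

end Paths

structure IsExcursion (n : ℕ) (F : ℕ → Bool) : Prop where
  pos : 0 < n
  count_true : Nat.count (F · = true) (2 * n) = n
  count_false_le : ∀ i ≤ 2 * n, Nat.count (F · = false) i ≤ Nat.count (F · = true) i

lemma isExcursion_toSeq_iff {n : ℕ} (hn : 0 < n) (f : Fin (2 * n) → Bool) :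
    IsExcursion n (toSeq f) ↔ pathVal f (2 * n) = 0 ∧ IsNonneg f := by
  have hsum := count_true_add_count_false (toSeq f) (2 * n)
  constructor
  · rintro ⟨-, htrue, hle⟩
    refine ⟨by rw [pathVal_eq_count f le_rfl]; omega, fun i hi => ?_⟩
    have hi : i ≤ 2 * n := Nat.lt_succ_iff.1 (mem_range.1 hi)
    have := hle i hi
    rw [pathVal_eq_count f hi]
    omega
  · rintro ⟨hend, hnn⟩
    rw [pathVal_eq_count f le_rfl] at hend
    refine ⟨hn, by omega, fun i hi => ?_⟩
    have := hnn i (mem_range.2 (by omega))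
    rw [pathVal_eq_count f hi] at this
    omega

def toPair (n : ℕ) (F : ℕ → Bool) : Finset ℕ × Finset ℕ :=
  ((turnHeights F true (2 * n - 1)).erase n, turnHeights F false (2 * n - 1))

def ofPair (n : ℕ) (p : Finset ℕ × Finset ℕ) : ℕ → Bool := decode (insert n p.1) (insert n p.2)

namespace IsExcursion

variable {n : ℕ} {F : ℕ → Bool} (hF : IsExcursion n F)
include hF

lemma apply_zero : F 0 = true := by
  have := hF.count_false_le 1 (by have := hF.pos; omega)
  cases h : F 0 <;> simp_all [Nat.count_succ]

lemma count_two_mul_sub_one :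
    Nat.count (F · = true) (2 * n - 1) = n ∧ Nat.count (F · = false) (2 * n - 1) = n - 1 := by
  have hn := hF.pos
  have hsum := count_true_add_count_false F (2 * n - 1)
  have hle := hF.count_false_le (2 * n - 1) (by omega)
  have hlast := Nat.count_succ (F · = true) (2 * n - 1)
  rw [Nat.sub_add_cancel (by omega), hF.count_true] at hlast
  split_ifs at hlast <;> omega

lemma apply_two_mul_sub_one : F (2 * n - 1) = false := by
  have hn := hF.pos
  have hlast := Nat.count_succ (F · = true) (2 * n - 1)
  rw [Nat.sub_add_cancel (by omega), hF.count_true, hF.count_two_mul_sub_one.1] at hlast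
  simpa using hlast

lemma count_false_lt {j : ℕ} (hj : j ≤ 2 * n - 1) : Nat.count (F · = false) j < n := by
  have := Nat.count_monotone (F · = false) hj
  have := hF.count_two_mul_sub_one.2
  have := hF.pos
  omega

lemma card_turns : #(turns F true (2 * n - 1)) = #(turns F false (2 * n - 1)) + 1 := by
  simpa [hF.apply_zero, hF.apply_two_mul_sub_one] using card_turns_true_add F (2 * n - 1)

lemma cornerBalanced {i : ℕ} (hi : i ≤ 2 * n - 1) :
    CornerBalanced (turnHeights F true (2 * n - 1)) (turnHeights F false (2 * n - 1)) F i :=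
  cornerBalanced_turnHeights hF.apply_zero hi

lemma turnHeights_true_subset : turnHeights F true (2 * n - 1) ⊆ Icc 1 n := by
  simpa only [hF.count_two_mul_sub_one.1] using turnHeights_subset (F := F) true (2 * n - 1)

lemma turnHeights_false_subset : turnHeights F false (2 * n - 1) ⊆ Icc 1 (n - 1) := by
  simpa only [hF.count_two_mul_sub_one.2] using turnHeights_subset (F := F) false (2 * n - 1)

lemma cardLE_turnHeights_true_le_false {c : ℕ} (hc : c < n) :
    cardLE (turnHeights F true (2 * n - 1)) c ≤ cardLE (turnHeights F false (2 * n - 1)) c := by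
  -- At the `(c+1)`-st up step at most `c` down steps have been made, by nonnegativity.
  obtain ⟨i, hi, hup, rfl⟩ := exists_count_eq_of_lt (p := (F · = true)) (N := 2 * n)
    (by rw [hF.count_true]; exact hc)
  have hbal := hF.cornerBalanced (i := i) (by omega)
  rw [CornerBalanced, hup, Bool.toNat_true] at hbal
  have := cardLE_mono (turnHeights F false (2 * n - 1)) (hF.count_false_le i hi.le)
  omega

lemma mem_turnHeights_true : n ∈ turnHeights F true (2 * n - 1) := by
  by_contra hmem
  have h := hF.cardLE_turnHeights_true_le_false (c := n - 1) (by have := hF.pos; omega)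
  rw [cardLE_eq_card fun x hx => ?_, cardLE_eq_card fun x hx => (mem_Icc.1
      (hF.turnHeights_false_subset hx)).2, card_turnHeights, card_turnHeights, hF.card_turns] at h
  · omega
  · have := mem_Icc.1 (hF.turnHeights_true_subset hx)
    have := ne_of_mem_of_not_mem hx hmem
    omega

lemma toPair_mem : toPair n F ∈ dominatedPairs (n - 1) (#(turns F true (2 * n - 1)) - 1) := by
  have hS := hF.turnHeights_true_subset
  have hT := hF.turnHeights_false_subset
  have hS' : (turnHeights F true (2 * n - 1)).erase n ⊆ Icc 1 (n - 1) := fun x hx => by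
    have := mem_Icc.1 (hS (mem_of_mem_erase hx))
    have := ne_of_mem_erase hx
    exact mem_Icc.2 (by omega)
  have hcard : #((turnHeights F true (2 * n - 1)).erase n) = #(turns F true (2 * n - 1)) - 1 := by
    rw [card_erase_of_mem hF.mem_turnHeights_true, card_turnHeights]
  have hcardT : #(turnHeights F false (2 * n - 1)) = #(turns F true (2 * n - 1)) - 1 := by
    rw [card_turnHeights, hF.card_turns, Nat.add_sub_cancel]
  refine mem_dominatedPairs.2 ⟨⟨hS', hcard⟩, ⟨hT, hcardT⟩, fun c => ?_⟩
  rcases lt_or_ge c n with hc | hc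
  · rw [toPair, cardLE_erase_of_lt hc]
    exact hF.cardLE_turnHeights_true_le_false hc
  · rw [toPair, cardLE_eq_card fun x hx => (mem_Icc.1 (hS' hx)).2.trans (by omega), hcard,
      cardLE_eq_card fun x hx => (mem_Icc.1 (hT hx)).2.trans (by omega), hcardT]

lemma card_turns_eq_card_toPair_fst : #(turns F true (2 * n - 1)) = #(toPair n F).1 + 1 := by
  rw [toPair, card_erase_add_one hF.mem_turnHeights_true, card_turnHeights]

lemma ofPair_toPair {i : ℕ} (hi : i < 2 * n) : ofPair n (toPair n F) i = F i := by
  have hn := hF.pos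
  have hT0 : 0 ∉ insert n (turnHeights F false (2 * n - 1)) := by
    rw [mem_insert, not_or]; exact ⟨by omega, zero_notMem_turnHeights false _⟩
  have hbal : ∀ j ≤ 2 * n - 1, CornerBalanced (turnHeights F true (2 * n - 1))
      (insert n (turnHeights F false (2 * n - 1))) F j := fun j hj => by
    rw [CornerBalanced, cardLE_insert_of_lt (hF.count_false_lt hj)]
    exact hF.cornerBalanced hj
  rw [ofPair, toPair, insert_erase hF.mem_turnHeights_true]
  exact eq_of_cornerBalanced (fun j _ => cornerBalanced_decode (zero_notMem_turnHeights true _)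
    hT0 j) hbal i (by omega)

end IsExcursion

lemma dominates_insert {n : ℕ} {A B : Finset ℕ} (hA : ∀ x ∈ A, x < n) (hB : ∀ x ∈ B, x < n)
    (hcard : #A = #B) (h : Dominates A B) : Dominates (insert n A) (insert n B) := fun c => by
  rcases lt_or_ge c n with hc | hc
  · rw [cardLE_insert_of_lt hc, cardLE_insert_of_lt hc]
    exact h c
  · have hle : ∀ {X : Finset ℕ}, (∀ x ∈ X, x < n) → ∀ x ∈ insert n X, x ≤ c := fun hX x hx => by
      rcases mem_insert.1 hx with rfl | hx
      · exact hc
      · exact ((hX x hx).trans_le hc).le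
    rw [cardLE_eq_card (hle hA), cardLE_eq_card (hle hB),
      card_insert_of_notMem fun h => (hA n h).false, card_insert_of_notMem fun h => (hB n h).false,
      hcard]

section OfPair

variable {n r : ℕ} {p : Finset ℕ × Finset ℕ} (hp : p ∈ dominatedPairs (n - 1) r)
include hp

lemma lt_of_mem_dominatedPairs : (∀ x ∈ p.1, x < n) ∧ ∀ x ∈ p.2, x < n := by
  obtain ⟨⟨hA, -⟩, ⟨hB, -⟩, -⟩ := mem_dominatedPairs.1 hp
  exact ⟨fun x hx => by have := mem_Icc.1 (hA hx); omega,
    fun x hx => by have := mem_Icc.1 (hB hx); omega⟩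

lemma walk_ofPair_two_mul : walk (insert n p.1) (insert n p.2) (2 * n) = (n, n) := by
  obtain ⟨⟨-, hAcard⟩, ⟨-, hBcard⟩, hdom⟩ := mem_dominatedPairs.1 hp
  obtain ⟨hA, hB⟩ := lt_of_mem_dominatedPairs hp
  refine walk_two_mul (fun x hx => ?_) (mem_insert_self n p.2) ?_
    (dominates_insert hA hB (hAcard.trans hBcard.symm) hdom)
  · rcases mem_insert.1 hx with rfl | hx
    exacts [le_rfl, (hA x hx).le]
  · rw [card_insert_of_notMem fun h => (hA n h).false,
      card_insert_of_notMem fun h => (hB n h).false, hAcard, hBcard]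

variable (hn : 0 < n) {G : ℕ → Bool} (hG : ∀ i < 2 * n, G i = ofPair n p i)
include hn hG

lemma isExcursion_of_eqOn : IsExcursion n G := by
  obtain ⟨⟨-, hAcard⟩, ⟨-, hBcard⟩, hdom⟩ := mem_dominatedPairs.1 hp
  obtain ⟨hA, hB⟩ := lt_of_mem_dominatedPairs hp
  refine ⟨hn, ?_, fun i hi => ?_⟩
  · rw [count_eq_count_of_eqOn hG _ le_rfl, ofPair, count_decode_true,
      walk_ofPair_two_mul hp]
  · rw [count_eq_count_of_eqOn hG _ hi, count_eq_count_of_eqOn hG _ hi, ofPair,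
      count_decode_true, count_decode_false]
    exact walk_snd_le_fst (dominates_insert hA hB (hAcard.trans hBcard.symm) hdom) i

lemma cornerBalanced_of_eqOn {i : ℕ} (hi : i ≤ 2 * n - 1) :
    CornerBalanced (insert n p.1) p.2 G i := by
  obtain ⟨⟨hA, -⟩, ⟨hB, -⟩, -⟩ := mem_dominatedPairs.1 hp
  have hzero : ∀ {X : Finset ℕ}, X ⊆ Icc 1 (n - 1) → 0 ∉ insert n X := fun hX h => by
    rcases mem_insert.1 h with h | h
    · omega
    · exact absurd (mem_Icc.1 (hX h)).1 (by omega)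
  have hbal := cornerBalanced_decode (hzero hA) (hzero hB) i
  rw [CornerBalanced, ← ofPair, ← count_eq_count_of_eqOn hG _ (by omega),
    ← count_eq_count_of_eqOn hG _ (by omega), ← hG i (by omega),
    cardLE_insert_of_lt ((isExcursion_of_eqOn hp hn hG).count_false_lt hi)] at hbal
  exact hbal

lemma toPair_of_eqOn : toPair n G = p := by
  have hexc := isExcursion_of_eqOn hp hn hG
  obtain ⟨⟨hA, -⟩, ⟨hB, -⟩, -⟩ := mem_dominatedPairs.1 hp
  have hA' : insert n p.1 ⊆ Icc 1 n := insert_subset (mem_Icc.2 ⟨hn, le_rfl⟩)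
    (hA.trans (Icc_subset_Icc_right (Nat.sub_le n 1)))
  have hS : turnHeights G true (2 * n - 1) = insert n p.1 :=
    eq_of_forall_mem_Icc_iff hexc.turnHeights_true_subset hA' fun s hs =>
      mem_iff_mem_of_cornerBalanced_of_le_count_true (fun i hi => hexc.cornerBalanced hi)
        (fun i hi => cornerBalanced_of_eqOn hp hn hG hi) (by rwa [hexc.count_two_mul_sub_one.1])
  have hT : turnHeights G false (2 * n - 1) = p.2 :=
    eq_of_forall_mem_Icc_iff hexc.turnHeights_false_subset hB fun t ht =>
      mem_iff_mem_of_cornerBalanced_of_le_count_false (fun i hi => hexc.cornerBalanced hi)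
        (fun i hi => cornerBalanced_of_eqOn hp hn hG hi) (by rwa [hexc.count_two_mul_sub_one.2])
  rw [toPair, hS, hT, erase_insert fun h => (lt_of_mem_dominatedPairs hp).1 n h |>.false]

end OfPair

def excursions (n k : ℕ) : Finset (Fin (2 * n) → Bool) :=
  univ.filter fun f => pathVal f (2 * n) = 0 ∧ IsNonneg f ∧ numPeaks f = k

lemma excursions_zero {n : ℕ} (hn : 0 < n) : excursions n 0 = ∅ :=
  filter_eq_empty_iff.2 fun f _ ⟨hend, hnn, hpeaks⟩ => by
    have := ((isExcursion_toSeq_iff hn f).2 ⟨hend, hnn⟩).card_turns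
    rw [numPeaks_eq_card_turns] at hpeaks
    omega

lemma card_excursions_eq_card_dominatedPairs {n k : ℕ} (hn : 0 < n) (hk : 0 < k) :
    #(excursions n k) = #(dominatedPairs (n - 1) (k - 1)) := by
  have hofPair : ∀ p, ∀ i < 2 * n, toSeq (fun x : Fin (2 * n) => ofPair n p x) i = ofPair n p i :=
    fun p i hi => dif_pos hi
  refine card_bij' (fun f _ => toPair n (toSeq f)) (fun p _ x => ofPair n p x)
    (fun f hf => ?_) (fun p hp => ?_) (fun f hf => ?_)
    (fun p hp => toPair_of_eqOn hp hn (hofPair p))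
  · obtain ⟨-, hend, hnn, hpeaks⟩ := mem_filter.1 hf
    have hF := (isExcursion_toSeq_iff hn f).2 ⟨hend, hnn⟩
    rw [numPeaks_eq_card_turns] at hpeaks
    simpa [hpeaks] using hF.toPair_mem
  · have hF := isExcursion_of_eqOn hp hn (hofPair p)
    obtain ⟨hend, hnn⟩ := (isExcursion_toSeq_iff hn _).1 hF
    refine mem_filter.2 ⟨mem_univ _, hend, hnn, ?_⟩
    rw [numPeaks_eq_card_turns, hF.card_turns_eq_card_toPair_fst, toPair_of_eqOn hp hn (hofPair p),
      (mem_dominatedPairs.1 hp).1.2]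
    omega
  · obtain ⟨-, hend, hnn, -⟩ := mem_filter.1 hf
    have hF := (isExcursion_toSeq_iff hn f).2 ⟨hend, hnn⟩
    funext x
    rw [hF.ofPair_toPair x.isLt]
    exact dif_pos x.isLt

end Narayana

/-- Multiplied through by `n`; `binomial(n, k-1)` is read as `0` for `k = 0`. -/
theorem card_excursions_with_k_peaks (n k : ℕ) :
    n * ((Finset.univ : Finset (Fin (2 * n) → Bool)).filter
        (fun f => pathVal f (2 * n) = 0 ∧ IsNonneg f ∧ numPeaks f = k)).card
      = n.choose k * (if k = 0 then 0 else n.choose (k - 1)) := by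
  change n * (Narayana.excursions n k).card = _
  rcases n.eq_zero_or_pos with rfl | hn
  · rcases k with _ | k <;> simp
  rcases k.eq_zero_or_pos with rfl | hk
  · simp [Narayana.excursions_zero hn]
  obtain ⟨m, rfl⟩ : ∃ m, n = m + 1 := ⟨n - 1, by omega⟩
  obtain ⟨r, rfl⟩ : ∃ r, k = r + 1 := ⟨k - 1, by omega⟩
  rw [Narayana.card_excursions_eq_card_dominatedPairs hn hk, if_neg r.succ_ne_zero]
  simpa using Narayana.add_one_mul_card_dominatedPairs m r
end

section
/- The number of Bernoulli meanders of length n (nonnegative paths with ±1 steps starting at 0) having exactly k peaks equals binomial(⌊n/2⌋,k)·binomial(⌈n/2⌉,k). -/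
open Finset

-- Unlike `Ring.choose`, zero for negative `a`: the formulas below need `C(d - 1, k) = 0`
-- at `d = 0`.
def intChoose (a : ℤ) (k : ℕ) : ℤ := if 0 ≤ a then a.toNat.choose k else 0

lemma intChoose_of_neg {a : ℤ} (ha : a < 0) (k : ℕ) : intChoose a k = 0 := by
  simp [intChoose, ha.not_ge]

@[simp]
lemma intChoose_natCast (m k : ℕ) : intChoose m k = m.choose k := by
  simp [intChoose]

lemma intChoose_zero_right {a : ℤ} (ha : 0 ≤ a) : intChoose a 0 = 1 := by
  simp [intChoose, ha]

lemma intChoose_succ_right (a : ℤ) (k : ℕ) :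
    intChoose a (k + 1) = intChoose (a - 1) k + intChoose (a - 1) (k + 1) := by
  rcases lt_or_ge a 1 with ha | ha
  · rw [intChoose_of_neg (by omega : a - 1 < 0), intChoose_of_neg (by omega : a - 1 < 0)]
    rcases (show a < 0 ∨ a = 0 by omega) with ha | rfl
    · exact intChoose_of_neg ha _
    · simp [intChoose]
  · lift a - 1 to ℕ using (by omega) with m hm
    rw [show a = ((m + 1 : ℕ) : ℤ) by omega, intChoose_natCast, intChoose_natCast,
      intChoose_natCast, Nat.choose_succ_succ']
    push_cast
    ring

lemma card_filter_eq_add_card_filter_bool {α : Type*} (s : Finset α) (p : α → Prop)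
    [DecidablePred p] (c : α → Bool) :
    #{x ∈ s | p x} = #{x ∈ s | p x ∧ c x = true} + #{x ∈ s | p x ∧ c x = false} := by
  rw [← filter_filter, ← filter_filter, ← card_filter_add_card_filter_not (fun x => c x = true)]
  simp

section

variable {n : ℕ}

lemma card_filter_and_last_eq (p : (Fin (n + 1) → Bool) → Prop) [DecidablePred p] (b : Bool) :
    #{f | p f ∧ f (Fin.last n) = b} = #{g : Fin n → Bool | p (Fin.snoc g b)} := by
  have snoc_init {f : Fin (n + 1) → Bool} (hf : f (Fin.last n) = b) :
      Fin.snoc (Fin.init f) b = f := by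
    rw [← hf, Fin.snoc_init_self]
  refine (card_nbij' (fun g => Fin.snoc g b) Fin.init ?_ ?_ ?_ ?_).symm <;> intro g hg <;>
    simp_all

lemma pathVal_zero (f : Fin n → Bool) : pathVal f 0 = 0 := by
  simp [pathVal]

lemma pathVal_succ (f : Fin n → Bool) {i : ℕ} (hi : i < n) :
    pathVal f (i + 1) = pathVal f i + if f ⟨i, hi⟩ then 1 else -1 := by
  rw [pathVal, sum_range_succ, dif_pos hi, pathVal]

lemma pathVal_last (f : Fin (n + 1) → Bool) :
    pathVal f (n + 1) = pathVal f n + if f (Fin.last n) then 1 else -1 :=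
  pathVal_succ f n.lt_succ_self

lemma pathVal_le (f : Fin n → Bool) (i : ℕ) : pathVal f i ≤ i := by
  calc pathVal f i ≤ ∑ _j ∈ range i, (1 : ℤ) := by
        refine sum_le_sum fun j _ => ?_
        split_ifs <;> norm_num
    _ = i := by simp

lemma pathVal_self_eq (f : Fin n → Bool) : pathVal f n = n - 2 * #{i | f i = false} := by
  have hstep (b : Bool) : (if b then 1 else -1 : ℤ) = 1 - 2 * if b = false then 1 else 0 := by
    cases b <;> norm_num
  rw [pathVal, ← Fin.sum_univ_eq_sum_range]
  simp only [Fin.is_lt, dif_pos, hstep, sum_sub_distrib, ← mul_sum, sum_boole]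
  simp

lemma pathVal_snoc_of_le (g : Fin n → Bool) (b : Bool) {i : ℕ} (hi : i ≤ n) :
    pathVal (Fin.snoc g b : Fin (n + 1) → Bool) i = pathVal g i := by
  refine sum_congr rfl fun j hj => ?_
  have hjn : j < n := (mem_range.mp hj).trans_le hi
  simp [hjn, Fin.snoc, show j < n + 1 by omega]

lemma pathVal_snoc_self (g : Fin n → Bool) (b : Bool) :
    pathVal (Fin.snoc g b : Fin (n + 1) → Bool) (n + 1) = pathVal g n + if b then 1 else -1 := by
  rw [pathVal_last, pathVal_snoc_of_le g b le_rfl, Fin.snoc_last]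

lemma IsNonneg.pathVal_self_nonneg {f : Fin n → Bool} (hf : IsNonneg f) : 0 ≤ pathVal f n :=
  hf n (self_mem_range_succ n)

lemma isNonneg_snoc_iff (g : Fin n → Bool) (b : Bool) :
    IsNonneg (Fin.snoc g b : Fin (n + 1) → Bool) ↔
      IsNonneg g ∧ 0 ≤ pathVal g n + if b then 1 else -1 := by
  simp only [IsNonneg, mem_range]
  rw [Nat.forall_lt_succ_right, pathVal_snoc_self]
  refine and_congr_left' (forall₂_congr fun i hi => ?_)
  rw [pathVal_snoc_of_le g b (by omega)]

lemma isNonneg_snoc_true_iff (g : Fin n → Bool) :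
    IsNonneg (Fin.snoc g true : Fin (n + 1) → Bool) ↔ IsNonneg g := by
  rw [isNonneg_snoc_iff]
  exact and_iff_left_of_imp fun hg => by
    simpa using (IsNonneg.pathVal_self_nonneg hg).trans (by simp)

lemma isPeak_snoc_iff_of_lt (g : Fin n → Bool) (b : Bool) {x : ℕ} (hx : x < n) :
    IsPeak (Fin.snoc g b : Fin (n + 1) → Bool) x ↔ IsPeak g x := by
  simp only [IsPeak, pathVal_snoc_of_le g b (by omega : x ≤ n),
    pathVal_snoc_of_le g b (by omega : x - 1 ≤ n), pathVal_snoc_of_le g b (by omega : x + 1 ≤ n),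
    hx, hx.trans n.lt_succ_self]

lemma not_isPeak_snoc_true (g : Fin n → Bool) :
    ¬IsPeak (Fin.snoc g true : Fin (n + 1) → Bool) n := by
  rintro ⟨-, -, -, h⟩
  rw [pathVal_snoc_self, pathVal_snoc_of_le g true le_rfl] at h
  simp at h
  omega

lemma isPeak_snoc_last_iff (g : Fin (n + 1) → Bool) (b : Bool) :
    IsPeak (Fin.snoc g b : Fin (n + 2) → Bool) (n + 1) ↔ g (Fin.last n) = true ∧ b = false := by
  simp only [IsPeak, pathVal_snoc_of_le g b le_rfl, Nat.add_sub_cancel,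
    pathVal_snoc_of_le g b n.le_succ, pathVal_last]
  cases b <;> cases g (Fin.last n) <;> simp
  omega

lemma numPeaks_snoc (g : Fin n → Bool) (b : Bool) :
    numPeaks (Fin.snoc g b : Fin (n + 1) → Bool) =
      numPeaks g + if IsPeak (Fin.snoc g b : Fin (n + 1) → Bool) n then 1 else 0 := by
  rw [numPeaks, range_add_one, filter_insert,
    filter_congr fun x hx => isPeak_snoc_iff_of_lt g b (mem_range.mp hx)]
  split_ifs
  · exact card_insert_of_notMem (by simp)
  · rfl

lemma numPeaks_snoc_true (g : Fin n → Bool) :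
    numPeaks (Fin.snoc g true : Fin (n + 1) → Bool) = numPeaks g := by
  simp [numPeaks_snoc, not_isPeak_snoc_true]

lemma numPeaks_snoc_last (g : Fin (n + 1) → Bool) (b : Bool) :
    numPeaks (Fin.snoc g b : Fin (n + 2) → Bool) =
      numPeaks g + if g (Fin.last n) = true ∧ b = false then 1 else 0 := by
  simp only [numPeaks_snoc, isPeak_snoc_last_iff]

def meanderCount (n : ℕ) (h : ℤ) (k : ℕ) (b : Bool) : ℕ :=
  #{f : Fin (n + 1) → Bool |
    (IsNonneg f ∧ pathVal f (n + 1) = h ∧ numPeaks f = k) ∧ f (Fin.last n) = b}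

lemma meanderCount_of_neg {h : ℤ} (hh : h < 0) (k : ℕ) (b : Bool) : meanderCount n h k b = 0 := by
  refine card_eq_zero.mpr (filter_eq_empty_iff.mpr ?_)
  rintro f - ⟨⟨hf, rfl, -⟩, -⟩
  exact hh.not_ge (IsNonneg.pathVal_self_nonneg hf)

lemma meanderCount_of_gt {h : ℤ} (hh : n + 1 < h) (k : ℕ) (b : Bool) :
    meanderCount n h k b = 0 := by
  refine card_eq_zero.mpr (filter_eq_empty_iff.mpr ?_)
  rintro f - ⟨⟨-, rfl, -⟩, -⟩
  exact hh.not_ge (by exact_mod_cast pathVal_le f (n + 1))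

lemma meanderCount_zero (h : ℤ) (k : ℕ) (b : Bool) :
    meanderCount 0 h k b = if h = 1 ∧ k = 0 ∧ b = true then 1 else 0 := by
  rw [meanderCount, card_filter_and_last_eq]
  simp only [numPeaks_snoc, isNonneg_snoc_iff, pathVal_snoc_self]
  cases b <;> simp [IsNonneg, IsPeak, numPeaks, pathVal_zero, apply_ite card, eq_comm]

lemma meanderCount_succ_true (h : ℤ) (k : ℕ) :
    meanderCount (n + 1) h k true =
      meanderCount n (h - 1) k true + meanderCount n (h - 1) k false := by
  rw [meanderCount, card_filter_and_last_eq,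
    card_filter_eq_add_card_filter_bool _ _ (fun g => g (Fin.last n))]
  simp only [isNonneg_snoc_true_iff, pathVal_snoc_self, numPeaks_snoc_true, ← eq_sub_iff_add_eq]
  rfl

lemma meanderCount_succ_false {h : ℤ} (hh : 0 ≤ h) (k : ℕ) :
    meanderCount (n + 1) h k false =
      (if k = 0 then 0 else meanderCount n (h + 1) (k - 1) true) +
        meanderCount n (h + 1) k false := by
  rw [meanderCount, card_filter_and_last_eq,
    card_filter_eq_add_card_filter_bool _ _ (fun g => g (Fin.last n))]
  simp only [isNonneg_snoc_iff, pathVal_snoc_self, numPeaks_snoc_last, Bool.false_eq_true,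
    if_false, and_true]
  congr 1
  · split_ifs with hk
    · refine card_eq_zero.mpr (filter_eq_empty_iff.mpr ?_)
      rintro g - ⟨⟨-, -, hpeaks⟩, hlast⟩
      simp only [hlast, if_true] at hpeaks
      omega
    · refine congrArg card (filter_congr fun g _ => ?_)
      cases g (Fin.last n) <;> simp
      grind
  · refine congrArg card (filter_congr fun g _ => ?_)
    cases g (Fin.last n) <;> simp
    grind

-- The numbers of meanders with `u` up steps, `d` down steps and `k` peaks whose last step is
-- up, resp. down.
def upFormula (u d : ℤ) (k : ℕ) : ℤ :=
  intChoose (u - 1) k * intChoose d k - intChoose u k * intChoose (d - 1) k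

def downFormula (u d : ℤ) (k : ℕ) : ℤ :=
  if k = 0 then 0
  else intChoose (u - 1) (k - 1) * intChoose d k - intChoose u (k - 1) * intChoose (d - 1) k

lemma upFormula_add_downFormula {u : ℤ} (hu : 1 ≤ u) (d : ℤ) (k : ℕ) :
    upFormula u d k + downFormula u d k = upFormula (u + 1) d k := by
  rcases k with _ | k
  · simp [upFormula, downFormula, intChoose_zero_right, hu, (show (0 : ℤ) ≤ u by omega),
      (show (0 : ℤ) ≤ u + 1 by omega)]
  · simp only [upFormula, downFormula, add_sub_cancel_right, if_neg k.succ_ne_zero,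
      Nat.add_sub_cancel, intChoose_succ_right u, intChoose_succ_right (u + 1)]
    ring

lemma downFormula_succ_right (u d : ℤ) (k : ℕ) :
    downFormula u (d + 1) k = downFormula u d k + if k = 0 then 0 else upFormula u d (k - 1) := by
  rcases k with _ | k
  · simp [downFormula]
  · simp only [upFormula, downFormula, add_sub_cancel_right, if_neg k.succ_ne_zero,
      Nat.add_sub_cancel, intChoose_succ_right (d + 1), intChoose_succ_right d]
    ring

lemma downFormula_zero_right (u : ℤ) (k : ℕ) : downFormula u 0 k = 0 := by
  rcases k with _ | k
  · simp [downFormula]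
  · simp [downFormula, intChoose]

theorem meanderCount_eq_formula {u d : ℤ} (hud : u + d = n + 1) (hd : 0 ≤ d) (hdu : d ≤ u)
    (k : ℕ) :
    (meanderCount n (u - d) k true : ℤ) = upFormula u d k ∧
      (meanderCount n (u - d) k false : ℤ) = downFormula u d k := by
  induction n generalizing u d k with
  | zero =>
    obtain ⟨rfl, rfl⟩ : u = 1 ∧ d = 0 := by omega
    rcases k with _ | k <;> simp [meanderCount_zero, upFormula, downFormula, intChoose]
  | succ n ih =>
    constructor
    · rw [meanderCount_succ_true, Nat.cast_add]
      rcases hdu.lt_or_eq with hdu | rfl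
      · obtain ⟨v, rfl⟩ : ∃ v, u = v + 1 := ⟨u - 1, by ring⟩
        obtain ⟨hup, hdown⟩ := ih (u := v) (d := d) (by push_cast at hud; omega) hd (by omega) k
        rw [show v + 1 - d - 1 = v - d by ring, hup, hdown, upFormula_add_downFormula (by omega)]
      · simp [meanderCount_of_neg, upFormula, mul_comm]
    · rw [meanderCount_succ_false (by omega), Nat.cast_add]
      rcases hd.lt_or_eq with hd | rfl
      · obtain ⟨e, rfl⟩ : ∃ e, d = e + 1 := ⟨d - 1, by ring⟩
        have ih' := ih (u := u) (d := e) (by push_cast at hud; omega) (by omega) (by omega)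
        rw [show u - (e + 1) + 1 = u - e by ring, (ih' k).2, downFormula_succ_right, add_comm]
        split_ifs
        · rfl
        · rw [(ih' (k - 1)).1]
      · rw [meanderCount_of_gt, meanderCount_of_gt, downFormula_zero_right] <;>
          push_cast at hud ⊢ <;> omega

lemma card_meanders_eq_card_last_true (k : ℕ) :
    #{f : Fin n → Bool | IsNonneg f ∧ numPeaks f = k} =
      #{f : Fin (n + 1) → Bool | (IsNonneg f ∧ numPeaks f = k) ∧ f (Fin.last n) = true} := by
  rw [card_filter_and_last_eq]
  simp only [isNonneg_snoc_true_iff, numPeaks_snoc_true]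

lemma card_last_true_eq_sum_meanderCount (k : ℕ) :
    #{f : Fin (n + 1) → Bool | (IsNonneg f ∧ numPeaks f = k) ∧ f (Fin.last n) = true} =
      ∑ d ∈ range ((n + 1) / 2 + 1), meanderCount n ((n : ℤ) + 1 - 2 * d) k true := by
  rw [card_eq_sum_card_fiberwise (f := fun f => #{i | f i = false})]
  · refine sum_congr rfl fun d _ => congrArg card ?_
    rw [filter_filter]
    refine filter_congr fun f _ => ?_
    rw [pathVal_self_eq]
    push_cast
    constructor
    · rintro ⟨⟨⟨hf, hk⟩, hlast⟩, rfl⟩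
      exact ⟨⟨hf, rfl, hk⟩, hlast⟩
    · rintro ⟨⟨hf, hpath, hk⟩, hlast⟩
      exact ⟨⟨⟨hf, hk⟩, hlast⟩, by omega⟩
  · intro f hf
    have := IsNonneg.pathVal_self_nonneg (mem_filter.mp hf).2.1.1
    rw [pathVal_self_eq] at this
    simp only [coe_range, Set.mem_Iio]
    omega

end

lemma sum_range_upFormula (n m k : ℕ) :
    ∑ d ∈ range (m + 1), upFormula ((n : ℤ) + 1 - d) d k =
      intChoose ((n : ℤ) - m) k * intChoose m k := by
  set F : ℕ → ℤ := fun j => intChoose ((n : ℤ) + 1 - j) k * intChoose ((j : ℤ) - 1) k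
  have htel (d : ℕ) : upFormula ((n : ℤ) + 1 - d) d k = F (d + 1) - F d := by
    simp only [upFormula, F]
    push_cast
    ring_nf
  rw [sum_congr rfl fun d _ => htel d, sum_range_sub]
  simp [F, intChoose_of_neg]

/-- The number of Bernoulli meanders of length `n` with exactly `k` peaks is
`binomial(⌊n/2⌋,k) · binomial(⌈n/2⌉,k)`. -/
theorem card_meanders_with_k_peaks (n k : ℕ) :
    ((Finset.univ : Finset (Fin n → Bool)).filter
        (fun f => IsNonneg f ∧ numPeaks f = k)).card
      = (n / 2).choose k * ((n + 1) / 2).choose k := by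
  rw [card_meanders_eq_card_last_true, card_last_true_eq_sum_meanderCount]
  have hterm (d : ℕ) (hd : d ∈ range ((n + 1) / 2 + 1)) :
      (meanderCount n ((n : ℤ) + 1 - 2 * d) k true : ℤ) = upFormula ((n : ℤ) + 1 - d) d k := by
    rw [mem_range] at hd
    rw [← (meanderCount_eq_formula (by ring) d.cast_nonneg (by omega) k).1]
    ring_nf
  zify
  rw [sum_congr rfl hterm, sum_range_upFormula,
    show (n : ℤ) - ((n + 1) / 2 : ℕ) = (n / 2 : ℕ) by omega, intChoose_natCast, intChoose_natCast]
end

section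
/- For positive integers a, b, c, k: sum over y≥c of [binomial(a+y,k)·binomial(b-y,k-1) - binomial(a+y,k-1)·binomial(b-y,k)] equals binomial(a+c,k)·binomial(b-c+1,k). -/
/-! Put `F y = C(a+y,k)·C(b-y+1,k)`. Pascal's rule in each factor turns the summand into
`F y - F (y+1)`, so the sum telescopes to `F c - F (b+1)`, and `F (b+1) = 0` since
`C(0,k) = 0` for `k > 0`. -/

/-- Integer binomial coefficient with the convention that it vanishes unless
`0 ≤ p ≤ m`. -/
def ichoose (m p : ℤ) : ℤ :=
  if 0 ≤ m ∧ 0 ≤ p then ((m.toNat).choose p.toNat : ℤ) else 0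

open Finset

theorem Int.sum_Icc_sub_add_one {M : Type*} [AddCommGroup M] (f : ℤ → M) {c b : ℤ}
    (h : c ≤ b + 1) : ∑ y ∈ Icc c b, (f y - f (y + 1)) = f c - f (b + 1) := by
  obtain ⟨n, rfl⟩ : ∃ n : ℕ, b = c + n - 1 := ⟨(b + 1 - c).toNat, by omega⟩
  induction n with
  | zero => simp
  | succ n ih =>
    have hIcc : Icc c (c + ↑(n + 1) - 1) = insert (c + n) (Icc c (c + n - 1)) := by
      ext x; simp only [mem_Icc, mem_insert]; omega
    rw [hIcc, sum_insert (by simp), ih (by omega)]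
    push_cast
    simp only [sub_add_cancel, ← add_assoc]
    abel

theorem ichoose_eq_zero_of_lt {m p : ℤ} (h : m < p) : ichoose m p = 0 := by
  unfold ichoose
  split_ifs with hmp
  · rw [Nat.choose_eq_zero_of_lt (by omega), Nat.cast_zero]
  · rfl

theorem ichoose_add_one (m : ℤ) {k : ℤ} (hk : 0 < k) :
    ichoose (m + 1) k = ichoose m k + ichoose m (k - 1) := by
  rcases lt_trichotomy m (-1) with hm | rfl | hm
  · simp [ichoose, show ¬ 0 ≤ m by omega, show ¬ 0 ≤ m + 1 by omega]
  · rw [neg_add_cancel, ichoose_eq_zero_of_lt hk]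
    simp [ichoose]
  · obtain ⟨j, rfl⟩ : ∃ j : ℕ, k = j + 1 := ⟨(k - 1).toNat, by omega⟩
    lift m to ℕ using (by omega : 0 ≤ m)
    have hj : (0 : ℤ) ≤ j + 1 := by positivity
    have hm' : (0 : ℤ) ≤ m + 1 := by positivity
    simp [ichoose, Nat.choose_succ_succ, hj, hm', add_comm]

theorem ichoose_mul_sub_mul_eq (m n : ℤ) {k : ℤ} (hk : 0 < k) :
    ichoose m k * ichoose n (k - 1) - ichoose m (k - 1) * ichoose n k
      = ichoose m k * ichoose (n + 1) k - ichoose (m + 1) k * ichoose n k := by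
  rw [ichoose_add_one m hk, ichoose_add_one n hk]
  ring

theorem binomial_telescoping_sum_general (a b c k : ℤ)
    (hk : 0 < k) :
    ∑ y ∈ Finset.Icc c b,
        (ichoose (a + y) k * ichoose (b - y) (k - 1)
          - ichoose (a + y) (k - 1) * ichoose (b - y) k)
      = ichoose (a + c) k * ichoose (b - c + 1) k := by
  rcases le_or_gt c (b + 1) with hcb | hbc
  · set F : ℤ → ℤ := fun y => ichoose (a + y) k * ichoose (b - y + 1) k
    have hterm : ∀ y, ichoose (a + y) k * ichoose (b - y) (k - 1)
        - ichoose (a + y) (k - 1) * ichoose (b - y) k = F y - F (y + 1) := fun y => by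
      rw [ichoose_mul_sub_mul_eq _ _ hk]
      simp only [F]
      ring_nf
    have hF : F (b + 1) = 0 := by
      simp only [F, show b - (b + 1) + 1 = 0 by ring, ichoose_eq_zero_of_lt hk, mul_zero]
    simp only [hterm, Int.sum_Icc_sub_add_one F hcb, hF, sub_zero, F]
  · rw [Icc_eq_empty (by omega), sum_empty, ichoose_eq_zero_of_lt (by omega : b - c + 1 < k),
      mul_zero]

/-- For positive integers `a, b, c, k`,
`∑_{y ≥ c} [C(a+y,k)·C(b-y,k-1) - C(a+y,k-1)·C(b-y,k)] = C(a+c,k)·C(b-c+1,k)`.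
All summands with `y > b` vanish, so the sum over `y ≥ c` equals the sum over
`c ≤ y ≤ b`. -/
theorem binomial_telescoping_sum (a b c k : ℤ)
    (ha : 0 < a) (hb : 0 < b) (hc : 0 < c) (hk : 0 < k) :
    ∑ y ∈ Finset.Icc c b,
        (ichoose (a + y) k * ichoose (b - y) (k - 1)
          - ichoose (a + y) (k - 1) * ichoose (b - y) k)
      = ichoose (a + c) k * ichoose (b - c + 1) k :=
  binomial_telescoping_sum_general a b c k hk
end
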